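/- Assume σ ≠ 0. For every integer r ≥ 1, the conditional r-th falling factorial moment of the number of old blocks re-observed satisfies E[(R)_{r↓} | π] = r!·Σ_{v=0}^{r} binom(j−v, r−v)·(−1)^v·Σ_{{c_1,…,c_v}∈C_{j,v}} Σ_{k=0}^{m} (V_{n+m,j+k}/V_{n,j})·C(m, k; σ, −n + Σ_{i=1}^{v} n_{c_i} + (j−v)σ)/σ^k. -/

import Mathlib

/-!
Write `Z ρ` for the set of old blocks that receive no new element, so that `R = j - #(Z ρ)`.
Inclusion–exclusion expresses `(R)_{r↓}` through the indicators of `c ⊆ Z ρ`, reducing the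
moment to the probabilities that all blocks of a given `c` stay closed.

For such a `c`, add the `m` new items one at a time. Each either opens a new block or joins an
existing block `C` not containing a block of `c`, multiplying the weight by `|C| - σ`; these
factors sum to `|S| - kσ + ∑_{B ∉ c} (|B| - σ)` once the items of `S` are placed in `k` new blocks
and old ones. Hence the total weight with `k` new blocks satisfies the triangular recurrence of
`C(m, k; σ, γ_c)`. The normalising constant is the case `c = ∅`, which the recursion for `V`
collapses to `V n j`.
-/

open Finset

attribute [local instance] Classical.propDecidable

noncomputable section

/-- Rising factorial `x(x+1)⋯(x+N−1)`. -/
def risingFac (x : ℝ) (N : ℕ) : ℝ := ∏ i ∈ Finset.range N, (x + i)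

/-- Falling factorial `x(x−1)⋯(x−N+1)`. -/
def fallingFac (x : ℝ) (N : ℕ) : ℝ := ∏ i ∈ Finset.range N, (x - i)

/-- Noncentral generalized factorial coefficient `C(N,k;σ,γ)`. -/
def gfc (N k : ℕ) (σ γ : ℝ) : ℝ :=
  (1 / (Nat.factorial k : ℝ)) *
    ∑ i ∈ Finset.range (k + 1),
      (-1 : ℝ) ^ i * (Nat.choose k i : ℝ) * risingFac (-(i : ℝ) * σ - γ) N

/-- Central generalized factorial coefficient `C(N,k;σ)`. -/
def cgfc (N k : ℕ) (σ : ℝ) : ℝ := gfc N k σ 0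

/-- Binomial coefficient over `ℤ`, zero unless `0 ≤ b ≤ a`. -/
def ibinom (a b : ℤ) : ℝ :=
  if 0 ≤ b ∧ b ≤ a then (Nat.choose a.toNat b.toNat : ℝ) else 0

/-- Multinomial coefficient `m!/((l!)^r (m−rl)!)`, zero if `rl > m`. -/
def multinom (m l r : ℕ) : ℝ :=
  if r * l ≤ m then
    (Nat.factorial m : ℝ) / ((Nat.factorial l : ℝ) ^ r * (Nat.factorial (m - r * l) : ℝ))
  else 0

/-- `P` is a set partition of the finset `s`. -/
def IsPartOn {α : Type*} (s : Finset α) (P : Finset (Finset α)) : Prop :=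
  (∀ B ∈ P, B ⊆ s) ∧ ∅ ∉ P ∧ ∀ a ∈ s, ∃! B, B ∈ P ∧ a ∈ B

/-- Restriction of a partition to `s`. -/
def restrictPart {α : Type*} [DecidableEq α] (P : Finset (Finset α)) (s : Finset α) :
    Finset (Finset α) := (P.image fun C => C ∩ s).erase ∅

/-- Gibbs probability of a partition with block sizes `|C|` and `VN k` the Gibbs weight. -/
def gibbsW {α : Type*} (σ : ℝ) (VN : ℕ → ℝ) (P : Finset (Finset α)) : ℝ :=
  VN P.card * ∏ C ∈ P, risingFac (1 - σ) (C.card - 1)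

/-- Ewens–Pitman weight system. -/
def EPV (σ θ : ℝ) : ℕ → ℕ → ℝ :=
  fun N k => (∏ i ∈ Finset.range k, (θ + (i : ℝ) * σ)) / risingFac θ N

/-- The "old" elements `{1,…,n}` inside `{1,…,n+m}`. -/
def oldSet (n m : ℕ) : Finset (Fin (n + m)) :=
  Finset.univ.filter fun x => (x : ℕ) < n

/-- Number of new elements in the block of `ρ` containing the old block `Bi`. -/
def Scount (n m : ℕ) (Bi : Finset (Fin (n + m))) (ρ : Finset (Finset (Fin (n + m)))) : ℕ :=
  ∑ C ∈ ρ.filter (fun C => Bi ⊆ C), (C \ oldSet n m).card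

/-- Partitions of `{1,…,n+m}` extending the partition `πP` of the old elements. -/
def extensions (n m : ℕ) (πP : Finset (Finset (Fin (n + m)))) :
    Finset (Finset (Finset (Fin (n + m)))) :=
  Finset.univ.filter fun ρ => IsPartOn Finset.univ ρ ∧ restrictPart ρ (oldSet n m) = πP

/-- Conditional expectation given complete information (the initial partition `πP`). -/
def condExpPi (σ : ℝ) (V : ℕ → ℕ → ℝ) (n m : ℕ) (πP : Finset (Finset (Fin (n + m))))
    (f : Finset (Finset (Fin (n + m))) → ℝ) : ℝ :=
  (∑ ρ ∈ extensions n m πP, f ρ * gibbsW σ (V (n + m)) ρ) /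
    (∑ ρ ∈ extensions n m πP, gibbsW σ (V (n + m)) ρ)

/-- Partitions of `{1,…,n+m}` whose restriction to the old elements has exactly `j` blocks. -/
def withJ (n m j : ℕ) : Finset (Finset (Finset (Fin (n + m)))) :=
  Finset.univ.filter fun ρ =>
    IsPartOn Finset.univ ρ ∧ (restrictPart ρ (oldSet n m)).card = j

/-- Partitions of `s` with exactly `j` blocks. -/
def partsJOf {α : Type*} [Fintype α] (s : Finset α) (j : ℕ) :
    Finset (Finset (Finset α)) :=
  Finset.univ.filter fun π' => IsPartOn s π' ∧ π'.card = j

/-- Conditional expectation given the incomplete information `K_n = j`. -/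
def condExpK (σ : ℝ) (V : ℕ → ℕ → ℝ) (n m j : ℕ)
    (f : Finset (Finset (Fin (n + m))) → ℝ) : ℝ :=
  (∑ ρ ∈ withJ n m j, f ρ * gibbsW σ (V (n + m)) ρ) /
    (∑ π' ∈ partsJOf (oldSet n m) j, gibbsW σ (V n) π')

/-- Number of old blocks (indexed by `B`) re-observed in the additional sample. -/
def RcntB (n m j : ℕ) (B : Fin j → Finset (Fin (n + m)))
    (ρ : Finset (Finset (Fin (n + m)))) : ℕ :=
  (Finset.univ.filter fun i : Fin j => Scount n m (B i) ρ ≠ 0).card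

/-- Number of old blocks (indexed by `B`) re-observed with frequency `l`. -/
def RlcntB (n m j l : ℕ) (B : Fin j → Finset (Fin (n + m)))
    (ρ : Finset (Finset (Fin (n + m)))) : ℕ :=
  (Finset.univ.filter fun i : Fin j => Scount n m (B i) ρ = l).card

/-- Number of blocks of the restriction whose containing block has a new element. -/
def Rcnt (n m : ℕ) (ρ : Finset (Finset (Fin (n + m)))) : ℕ :=
  ((restrictPart ρ (oldSet n m)).filter fun Bi =>
    ∃ C ∈ ρ, Bi ⊆ C ∧ (C \ oldSet n m) ≠ ∅).card

/-- Number of blocks of the restriction whose containing block has exactly `l` new elements. -/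
def Rlcnt (n m l : ℕ) (ρ : Finset (Finset (Fin (n + m)))) : ℕ :=
  ((restrictPart ρ (oldSet n m)).filter fun Bi =>
    ∃ C ∈ ρ, Bi ⊆ C ∧ (C \ oldSet n m).card = l).card

/-- Number of bijections from `Fin j` onto the blocks of `π'` satisfying `Q`. -/
def bijCount {α : Type*} [Fintype α] (j : ℕ) (π' : Finset (Finset α))
    (Q : (Fin j → Finset α) → Prop) : ℕ :=
  ((Finset.univ : Finset (Fin j → Finset α)).filter fun β =>
    Function.Injective β ∧ Finset.image β Finset.univ = π' ∧ Q β).card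

/-- Conditional expectation given almost-complete information. -/
def condExpTau (σ : ℝ) (V : ℕ → ℕ → ℝ) (n m j p : ℕ) (τ : Fin p → Fin j) (nτ : Fin p → ℕ)
    (f : Finset (Finset (Fin (n + m))) → ℝ) : ℝ :=
  (∑ ρ ∈ withJ n m j,
      (bijCount j (restrictPart ρ (oldSet n m)) (fun β => ∀ i, (β (τ i)).card = nτ i) : ℝ) *
        f ρ * gibbsW σ (V (n + m)) ρ) /
    (∑ π' ∈ partsJOf (oldSet n m) j,
      (bijCount j π' (fun β => ∀ i, (β (τ i)).card = nτ i) : ℝ) * gibbsW σ (V n) π')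

lemma risingFac_zero (x : ℝ) : risingFac x 0 = 1 := Finset.prod_range_zero _

lemma risingFac_succ (x : ℝ) (N : ℕ) : risingFac x (N + 1) = risingFac x N * (x + N) :=
  Finset.prod_range_succ _ _

lemma risingFac_pos {x : ℝ} (hx : 0 < x) (N : ℕ) : 0 < risingFac x N :=
  Finset.prod_pos fun _ _ => by positivity

lemma fallingFac_natCast (R r : ℕ) : fallingFac (R : ℝ) r = (r.factorial : ℝ) * R.choose r := by
  rw [fallingFac, ← descPochhammer_eval_eq_prod_range, descPochhammer_eval_eq_descFactorial,
    Nat.descFactorial_eq_factorial_mul_choose, Nat.cast_mul]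

lemma gfc_zero_zero (σ γ : ℝ) : gfc 0 0 σ γ = 1 := by
  simp [gfc, risingFac_zero]

lemma gfc_zero_succ (k : ℕ) (σ γ : ℝ) : gfc 0 (k + 1) σ γ = 0 := by
  have h : ∑ i ∈ Finset.range (k + 1 + 1), ((-1) ^ i * (k + 1).choose i : ℝ) = 0 := by
    exact_mod_cast Int.alternating_sum_range_choose_of_ne (Nat.succ_ne_zero k)
  simp only [gfc, risingFac_zero, mul_one, h, mul_zero]

lemma gfc_succ_zero (N : ℕ) (σ γ : ℝ) : gfc (N + 1) 0 σ γ = ((N : ℝ) - γ) * gfc N 0 σ γ := by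
  rw [gfc, gfc, Finset.sum_range_one, Finset.sum_range_one, risingFac_succ, Nat.cast_zero]
  ring

lemma cast_choose_mul_succ_eq (k i : ℕ) :
    (k.choose i : ℝ) * (k + 1) = (k + 1).choose i * ((k + 1 : ℝ) - i) := by
  rcases le_or_gt i (k + 1) with hi | hi
  · have h := congrArg (Nat.cast : ℕ → ℝ) (Nat.choose_mul_succ_eq k i)
    push_cast [Nat.cast_sub hi] at h
    exact h
  · simp [Nat.choose_eq_zero_of_lt hi, Nat.choose_eq_zero_of_lt (Nat.lt_of_succ_lt hi)]

lemma gfc_succ_succ (N k : ℕ) (σ γ : ℝ) :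
    gfc (N + 1) (k + 1) σ γ =
      σ * gfc N k σ γ + ((N : ℝ) - (k + 1) * σ - γ) * gfc N (k + 1) σ γ := by
  set x : ℕ → ℝ := fun i => (-1) ^ i * risingFac (-(i : ℝ) * σ - γ) N
  have hterm : ∀ i ∈ Finset.range (k + 2),
      (-1 : ℝ) ^ i * ((k + 1).choose i : ℝ) * risingFac (-(i : ℝ) * σ - γ) (N + 1) =
        ((N : ℝ) - (k + 1) * σ - γ) * (((k + 1).choose i : ℝ) * x i) +
          σ * (k + 1) * ((k.choose i : ℝ) * x i) := by
    intro i _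
    simp only [x, risingFac_succ]
    linear_combination (-((-1 : ℝ) ^ i * risingFac (-(i : ℝ) * σ - γ) N * σ)) *
      cast_choose_mul_succ_eq k i
  have hdrop : ∑ i ∈ Finset.range (k + 2), (k.choose i : ℝ) * x i =
      ∑ i ∈ Finset.range (k + 1), (k.choose i : ℝ) * x i := by
    rw [Finset.sum_range_succ, Nat.choose_succ_self, Nat.cast_zero, zero_mul, add_zero]
  have hsum : ∀ M, ∑ i ∈ Finset.range (M + 1),
      (-1 : ℝ) ^ i * (M.choose i : ℝ) * risingFac (-(i : ℝ) * σ - γ) N =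
        ∑ i ∈ Finset.range (M + 1), (M.choose i : ℝ) * x i :=
    fun M => Finset.sum_congr rfl fun i _ => by ring
  simp only [gfc]
  rw [Finset.sum_congr rfl hterm, Finset.sum_add_distrib, ← Finset.mul_sum, ← Finset.mul_sum,
    hdrop, hsum, hsum, Nat.factorial_succ, Nat.cast_mul]
  have : (k.factorial : ℝ) ≠ 0 := by positivity
  field_simp
  push_cast
  ring

lemma gfc_eq_zero_of_lt {N k : ℕ} (h : N < k) (σ γ : ℝ) : gfc N k σ γ = 0 := by
  obtain ⟨k, rfl⟩ := Nat.exists_eq_add_of_lt h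
  induction N generalizing k with
  | zero => simpa using gfc_zero_succ k σ γ
  | succ N ih =>
    rw [show N + 1 + k + 1 = (N + k + 1) + 1 by ring, gfc_succ_succ, ih k (by omega),
      show N + k + 1 + 1 = N + (k + 1) + 1 by ring, ih (k + 1) (by omega)]
    ring

def GibbsRecursion (σ : ℝ) (V : ℕ → ℕ → ℝ) : Prop :=
  ∀ N k, 1 ≤ k → k ≤ N → V N k = V (N + 1) (k + 1) + ((N : ℝ) - (k : ℝ) * σ) * V (N + 1) k

/-- Summed over the number `k` of new blocks, the weights of all extensions of a partition of
`n` items into `j` blocks give back `V n j`. -/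
lemma sum_V_mul_gfc_div_pow {σ : ℝ} (hσ : σ ≠ 0) {V : ℕ → ℕ → ℝ} (hVrec : GibbsRecursion σ V)
    {n j : ℕ} (hj : 1 ≤ j) (hjn : j ≤ n) (m : ℕ) :
    ∑ k ∈ Finset.range (m + 1),
      V (n + m) (j + k) * (gfc m k σ ((j : ℝ) * σ - n) / σ ^ k) = V n j := by
  induction m with
  | zero => simp [gfc_zero_zero]
  | succ m ih =>
    set γ : ℝ := (j : ℝ) * σ - n
    set b : ℕ → ℝ := fun k => gfc m k σ γ / σ ^ k
    set c : ℕ → ℝ := fun k => ((n + m : ℕ) : ℝ) - ((j + k : ℕ) : ℝ) * σ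
    set W : ℕ → ℝ := fun k => V (n + m + 1) (j + k)
    have hb_zero : gfc (m + 1) 0 σ γ / σ ^ 0 = c 0 * b 0 := by
      simp only [b, c, gfc_succ_zero, γ]
      push_cast
      ring
    have hb_succ : ∀ k, gfc (m + 1) (k + 1) σ γ / σ ^ (k + 1) = b k + c (k + 1) * b (k + 1) := by
      intro k
      simp only [b, c, gfc_succ_succ, γ, pow_succ]
      field_simp
      push_cast
      ring
    have hb_top : b (m + 1) = 0 := by
      simp only [b, gfc_eq_zero_of_lt (Nat.lt_succ_self m), zero_div]
    calc ∑ k ∈ Finset.range (m + 1 + 1),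
          V (n + (m + 1)) (j + k) * (gfc (m + 1) k σ γ / σ ^ k)
        = ∑ k ∈ Finset.range (m + 1), W (k + 1) * b k +
            ∑ k ∈ Finset.range (m + 1 + 1), W k * (c k * b k) := by
          rw [Finset.sum_range_succ', Finset.sum_range_succ' (fun k => W k * (c k * b k))]
          simp only [hb_succ, hb_zero, W, mul_add, Finset.sum_add_distrib, ← add_assoc n m 1]
          ring
      _ = ∑ k ∈ Finset.range (m + 1), (W (k + 1) + c k * W k) * b k := by
          rw [Finset.sum_range_succ _ (m + 1), hb_top, mul_zero, mul_zero, add_zero,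
            ← Finset.sum_add_distrib]
          exact Finset.sum_congr rfl fun k _ => by ring
      _ = ∑ k ∈ Finset.range (m + 1), V (n + m) (j + k) * b k := by
          refine Finset.sum_congr rfl fun k hk => ?_
          rw [Finset.mem_range] at hk
          rw [hVrec (n + m) (j + k) (by omega) (by omega)]
          simp only [W, c]
          ring_nf
      _ = V n j := ih

section InclusionExclusion

variable {ι : Type*} [Fintype ι] [DecidableEq ι]

lemma card_filter_superset_powersetCard (c : Finset ι) {r : ℕ} (hcr : c.card ≤ r) :
    ((Finset.univ.powersetCard r).filter (c ⊆ ·)).card =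
      (Fintype.card ι - c.card).choose (r - c.card) := by
  rw [← Finset.card_compl, ← Finset.card_powersetCard]
  refine Finset.card_bij' (fun T _ => T \ c) (fun T _ => T ∪ c) ?_ ?_ ?_ ?_
  · intro T hT
    obtain ⟨hT, hcT⟩ := Finset.mem_filter.mp hT
    obtain ⟨-, hTr⟩ := Finset.mem_powersetCard.mp hT
    rw [Finset.mem_powersetCard, Finset.card_sdiff_of_subset hcT, hTr]
    exact ⟨Finset.subset_compl_iff_disjoint_right.mpr Finset.sdiff_disjoint, rfl⟩
  · intro T hT
    obtain ⟨hTc, hTr⟩ := Finset.mem_powersetCard.mp hT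
    have hdisj : Disjoint T c := Finset.subset_compl_iff_disjoint_right.mp hTc
    rw [Finset.mem_filter, Finset.mem_powersetCard, Finset.card_union_of_disjoint hdisj, hTr]
    exact ⟨⟨Finset.subset_univ _, by omega⟩, Finset.subset_union_right⟩
  · intro T hT
    exact Finset.sdiff_union_of_subset (Finset.mem_filter.mp hT).2
  · intro T hT
    exact Finset.union_sdiff_cancel_right
      (Finset.subset_compl_iff_disjoint_right.mp (Finset.mem_powersetCard.mp hT).1)

lemma ibinom_sub_eq_choose {j r v : ℕ} (hvr : v ≤ r) (hvj : v ≤ j) :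
    ibinom ((j : ℤ) - v) ((r : ℤ) - v) = ((j - v).choose (r - v) : ℝ) := by
  unfold ibinom
  rw [← Nat.cast_sub hvj, ← Nat.cast_sub hvr, Int.toNat_natCast, Int.toNat_natCast]
  split_ifs with h
  · rfl
  · rw [Nat.choose_eq_zero_of_lt (by omega), Nat.cast_zero]

lemma sum_powersetCard_neg_one_pow_mul_indicator_subset {W : Finset ι} {r : ℕ}
    (hW : W.card ≤ r) :
    ∑ v ∈ Finset.range (r + 1), ∑ c ∈ Finset.univ.powersetCard v,
        (-1 : ℝ) ^ v * (if c ⊆ W then 1 else 0) = if W = ∅ then 1 else 0 := by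
  have hinner : ∀ v, ∑ c ∈ Finset.univ.powersetCard v,
      (-1 : ℝ) ^ v * (if c ⊆ W then 1 else 0) = (-1) ^ v * (W.card.choose v : ℝ) := by
    intro v
    rw [← Finset.mul_sum, Finset.sum_boole, ← Finset.card_powersetCard]
    congr 3
    ext c
    simp only [Finset.mem_filter, Finset.mem_powersetCard, Finset.subset_univ, true_and]
    tauto
  have halt : ∑ v ∈ Finset.range (W.card + 1), (-1 : ℝ) ^ v * (W.card.choose v : ℝ) =
      if W.card = 0 then 1 else 0 := by
    exact_mod_cast Int.alternating_sum_range_choose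
  rw [Finset.sum_congr rfl fun v _ => hinner v, ← Finset.sum_subset
    (Finset.range_subset_range.mpr (by omega : W.card + 1 ≤ r + 1)), halt]
  · simp only [Finset.card_eq_zero]
  · intro v _ hv
    rw [Finset.mem_range, not_lt] at hv
    rw [Nat.choose_eq_zero_of_lt hv, Nat.cast_zero, mul_zero]

lemma ibinom_eq_sum_indicator_superset {c : Finset ι} {r : ℕ} (hcr : c.card ≤ r) :
    ibinom ((Fintype.card ι : ℤ) - c.card) ((r : ℤ) - c.card) =
      ∑ T ∈ Finset.univ.powersetCard r, if c ⊆ T then (1 : ℝ) else 0 := by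
  rw [Finset.sum_boole, card_filter_superset_powersetCard c hcr,
    ibinom_sub_eq_choose hcr (Finset.card_le_univ c)]

/-- Count the `r`-subsets `T` with `T ∩ Z = ∅` by inclusion–exclusion over `c ⊆ Z ∩ T`. -/
lemma fallingFac_card_compl_eq_sum (Z : Finset ι) (r : ℕ) :
    fallingFac (Zᶜ.card : ℝ) r =
      (r.factorial : ℝ) * ∑ v ∈ Finset.range (r + 1),
        ibinom ((Fintype.card ι : ℤ) - v) ((r : ℤ) - v) * (-1 : ℝ) ^ v *
          ∑ c ∈ Finset.univ.powersetCard v, if c ⊆ Z then (1 : ℝ) else 0 := by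
  rw [fallingFac_natCast]
  congr 1
  have hind : ∀ c T : Finset ι, ((if c ⊆ Z then (1 : ℝ) else 0) * if c ⊆ T then 1 else 0) =
      if c ⊆ Z ∩ T then 1 else 0 := by
    intro c T
    simp only [Finset.subset_inter_iff, ite_zero_mul_ite_zero, mul_one]
  symm
  calc ∑ v ∈ Finset.range (r + 1),
        ibinom ((Fintype.card ι : ℤ) - v) ((r : ℤ) - v) * (-1 : ℝ) ^ v *
          ∑ c ∈ Finset.univ.powersetCard v, (if c ⊆ Z then (1 : ℝ) else 0)
      = ∑ v ∈ Finset.range (r + 1), ∑ c ∈ Finset.univ.powersetCard v,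
          ∑ T ∈ Finset.univ.powersetCard r, (-1 : ℝ) ^ v * if c ⊆ Z ∩ T then 1 else 0 := by
        refine Finset.sum_congr rfl fun v hv => ?_
        rw [Finset.mul_sum]
        refine Finset.sum_congr rfl fun c hc => ?_
        obtain rfl := (Finset.mem_powersetCard.mp hc).2
        rw [ibinom_eq_sum_indicator_superset (by simpa [Nat.lt_succ_iff] using hv),
          Finset.sum_mul, Finset.sum_mul]
        exact Finset.sum_congr rfl fun T _ => by rw [← hind]; ring
    _ = ∑ T ∈ Finset.univ.powersetCard r, ∑ v ∈ Finset.range (r + 1),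
          ∑ c ∈ Finset.univ.powersetCard v, (-1 : ℝ) ^ v * if c ⊆ Z ∩ T then 1 else 0 := by
        simp only [Finset.sum_comm (s := Finset.univ.powersetCard r)]
    _ = ∑ T ∈ Finset.univ.powersetCard r, if Z ∩ T = ∅ then (1 : ℝ) else 0 := by
        refine Finset.sum_congr rfl fun T hT => ?_
        exact sum_powersetCard_neg_one_pow_mul_indicator_subset
          ((Finset.card_le_card Finset.inter_subset_right).trans
            (Finset.mem_powersetCard.mp hT).2.le)
    _ = (Zᶜ.card.choose r : ℝ) := by
        rw [Finset.sum_boole, ← Finset.card_powersetCard]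
        congr 2
        ext T
        simp only [Finset.mem_filter, Finset.mem_powersetCard, Finset.subset_univ, true_and,
          Finset.subset_compl_iff_disjoint_left, Finset.disjoint_iff_inter_eq_empty]
        tauto

end InclusionExclusion

lemma Finset.biUnion_id_eq_union_erase {α : Type*} [DecidableEq α] {P : Finset (Finset α)}
    {C : Finset α} (hC : C ∈ P) : P.biUnion id = C ∪ (P.erase C).biUnion id := by
  conv_lhs => rw [← Finset.insert_erase hC]
  rw [Finset.biUnion_insert]
  rfl

namespace IsPartOn

variable {α : Type*} {s : Finset α} {P : Finset (Finset α)} {B C : Finset α} {t : α}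

lemma subset (hP : IsPartOn s P) (hB : B ∈ P) : B ⊆ s := hP.1 B hB

lemma nonempty (hP : IsPartOn s P) (hB : B ∈ P) : B.Nonempty :=
  Finset.nonempty_iff_ne_empty.mpr fun h => hP.2.1 (h ▸ hB)

lemma eq_of_mem_of_mem (hP : IsPartOn s P) (hB : B ∈ P) (hC : C ∈ P) {a : α}
    (haB : a ∈ B) (haC : a ∈ C) : B = C := by
  obtain ⟨D, -, hD⟩ := hP.2.2 a (hP.subset hB haB)
  rw [hD B ⟨hB, haB⟩, hD C ⟨hC, haC⟩]

lemma pairwiseDisjoint (hP : IsPartOn s P) : (P : Set (Finset α)).PairwiseDisjoint id :=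
  fun _ hB _ hC hne => Finset.disjoint_left.mpr fun _ haB haC =>
    hne (hP.eq_of_mem_of_mem hB hC haB haC)

lemma notMem_of_notMem (hP : IsPartOn s P) (ht : t ∉ s) (hC : C ∈ P) : t ∉ C :=
  fun h => ht (hP.subset hC h)

lemma card_pos (hP : IsPartOn s P) (hs : s.Nonempty) : 0 < P.card := by
  obtain ⟨a, ha⟩ := hs
  obtain ⟨B, ⟨hB, -⟩, -⟩ := hP.2.2 a ha
  exact Finset.card_pos.mpr ⟨B, hB⟩

variable [DecidableEq α]

lemma biUnion_eq (hP : IsPartOn s P) : P.biUnion id = s := by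
  ext a
  simp only [Finset.mem_biUnion, id]
  refine ⟨fun ⟨B, hB, haB⟩ => hP.subset hB haB, fun ha => ?_⟩
  obtain ⟨B, hB, -⟩ := hP.2.2 a ha
  exact ⟨B, hB⟩

lemma sum_card (hP : IsPartOn s P) : ∑ C ∈ P, C.card = s.card := by
  rw [← hP.biUnion_eq, Finset.card_biUnion hP.pairwiseDisjoint]
  rfl

lemma card_le (hP : IsPartOn s P) : P.card ≤ s.card := by
  rw [← hP.sum_card, Finset.card_eq_sum_ones]
  exact Finset.sum_le_sum fun C hC => Finset.card_pos.mpr (hP.nonempty hC)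

end IsPartOn

lemma isPartOn_iff {α : Type*} [DecidableEq α] {s : Finset α} {P : Finset (Finset α)} :
    IsPartOn s P ↔ ∅ ∉ P ∧ (P : Set (Finset α)).PairwiseDisjoint id ∧ P.biUnion id = s := by
  refine ⟨fun hP => ⟨hP.2.1, hP.pairwiseDisjoint, hP.biUnion_eq⟩, ?_⟩
  rintro ⟨hempty, hdisj, rfl⟩
  refine ⟨fun B hB => Finset.subset_biUnion_of_mem id hB, hempty, fun a ha => ?_⟩
  obtain ⟨B, hB, haB⟩ := Finset.mem_biUnion.mp ha
  refine ⟨B, ⟨hB, haB⟩, fun C ⟨hC, haC⟩ => ?_⟩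
  by_contra hne
  exact Finset.disjoint_left.mp (hdisj hC hB hne) haC haB

namespace IsPartOn

variable {α : Type*} [DecidableEq α] {s : Finset α} {P : Finset (Finset α)} {C : Finset α}
  {t : α}

lemma notMem_biUnion_erase (hP : IsPartOn s P) (hC : C ∈ P) (htC : t ∈ C) :
    t ∉ (P.erase C).biUnion id := by
  simp only [Finset.mem_biUnion, Finset.mem_erase, id, not_exists, not_and]
  exact fun D ⟨hDC, hD⟩ htD => hDC (hP.eq_of_mem_of_mem hD hC htD htC)

lemma insert_singleton (hP : IsPartOn s P) (ht : t ∉ s) :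
    IsPartOn (insert t s) (insert {t} P) := by
  refine isPartOn_iff.mpr ⟨?_, ?_, ?_⟩
  · simpa [eq_comm] using hP.2.1
  · rw [Finset.coe_insert]
    refine hP.pairwiseDisjoint.insert fun D hD _ => ?_
    exact Finset.disjoint_singleton_left.mpr (hP.notMem_of_notMem ht hD)
  · rw [Finset.biUnion_insert, hP.biUnion_eq, Finset.insert_eq]
    rfl

lemma insert_block (hP : IsPartOn s P) (ht : t ∉ s) (hC : C ∈ P) :
    IsPartOn (insert t s) (insert (insert t C) (P.erase C)) := by
  refine isPartOn_iff.mpr ⟨?_, ?_, ?_⟩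
  · simp only [Finset.mem_insert, Finset.mem_erase, not_or]
    exact ⟨(Finset.insert_ne_empty t C).symm, fun h => hP.2.1 h.2⟩
  · rw [Finset.coe_insert]
    refine (hP.pairwiseDisjoint.subset (Finset.coe_subset.mpr (Finset.erase_subset C P))).insert
      fun D hD _ => ?_
    obtain ⟨hDC, hD⟩ := Finset.mem_erase.mp hD
    exact Finset.disjoint_insert_left.mpr
      ⟨hP.notMem_of_notMem ht hD, hP.pairwiseDisjoint hC hD hDC.symm⟩
  · rw [Finset.biUnion_insert, ← hP.biUnion_eq, Finset.biUnion_id_eq_union_erase hC]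
    exact Finset.insert_union t C _

lemma erase_singleton (hP : IsPartOn (insert t s) P) (ht : t ∉ s) (htP : {t} ∈ P) :
    IsPartOn s (P.erase {t}) := by
  refine isPartOn_iff.mpr ⟨fun h => hP.2.1 (Finset.mem_of_mem_erase h),
    hP.pairwiseDisjoint.subset (Finset.coe_subset.mpr (Finset.erase_subset _ P)), ?_⟩
  rw [← Finset.erase_insert ht, ← hP.biUnion_eq, Finset.biUnion_id_eq_union_erase htP,
    Finset.erase_union_distrib, Finset.erase_singleton, Finset.empty_union,
    Finset.erase_eq_of_notMem (hP.notMem_biUnion_erase htP (Finset.mem_singleton_self t))]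

lemma erase_block (hP : IsPartOn (insert t s) P) (ht : t ∉ s) (hC : C ∈ P) (htC : t ∈ C)
    (hCt : C ≠ {t}) : IsPartOn s (insert (C.erase t) (P.erase C)) := by
  refine isPartOn_iff.mpr ⟨?_, ?_, ?_⟩
  · simp only [Finset.mem_insert, Finset.mem_erase, not_or]
    refine ⟨fun h => ?_, fun h => hP.2.1 h.2⟩
    rcases (Finset.erase_eq_empty_iff C t).mp h.symm with h | h
    exacts [hP.2.1 (h ▸ hC), hCt h]
  · rw [Finset.coe_insert]
    refine (hP.pairwiseDisjoint.subset (Finset.coe_subset.mpr (Finset.erase_subset C P))).insert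
      fun D hD _ => ?_
    obtain ⟨hDC, hD⟩ := Finset.mem_erase.mp hD
    exact (hP.pairwiseDisjoint hC hD hDC.symm).mono_left (Finset.erase_subset t C)
  · rw [← Finset.erase_insert ht, ← hP.biUnion_eq, Finset.biUnion_id_eq_union_erase hC,
      Finset.erase_union_distrib, Finset.erase_eq_of_notMem (hP.notMem_biUnion_erase hC htC),
      Finset.biUnion_insert]
    rfl

end IsPartOn

section Parts

variable {α : Type*} [Fintype α]

def partsOf (s : Finset α) : Finset (Finset (Finset α)) := Finset.univ.filter (IsPartOn s)

lemma mem_partsOf {s : Finset α} {P : Finset (Finset α)} : P ∈ partsOf s ↔ IsPartOn s P := by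
  simp [partsOf]

variable [DecidableEq α] {s : Finset α} {t : α}

lemma sum_partsOf_insert_filter_singleton_mem (ht : t ∉ s) (f : Finset (Finset α) → ℝ) :
    ∑ ρ ∈ (partsOf (insert t s)).filter ({t} ∈ ·), f ρ = ∑ τ ∈ partsOf s, f (insert {t} τ) := by
  refine Finset.sum_bij' (fun ρ _ => ρ.erase {t}) (fun τ _ => insert {t} τ) ?_ ?_ ?_ ?_ ?_
  · intro ρ hρ
    obtain ⟨hρ, htρ⟩ := Finset.mem_filter.mp hρ
    exact mem_partsOf.mpr ((mem_partsOf.mp hρ).erase_singleton ht htρ)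
  · intro τ hτ
    exact Finset.mem_filter.mpr
      ⟨mem_partsOf.mpr ((mem_partsOf.mp hτ).insert_singleton ht), Finset.mem_insert_self _ _⟩
  · intro ρ hρ
    exact Finset.insert_erase (Finset.mem_filter.mp hρ).2
  · intro τ hτ
    exact Finset.erase_insert fun h =>
      (mem_partsOf.mp hτ).notMem_of_notMem ht h (Finset.mem_singleton_self t)
  · intro ρ hρ
    rw [Finset.insert_erase (Finset.mem_filter.mp hρ).2]

lemma sum_partsOf_insert_filter_singleton_notMem (ht : t ∉ s) (f : Finset (Finset α) → ℝ) :
    ∑ ρ ∈ (partsOf (insert t s)).filter ({t} ∉ ·), f ρ =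
      ∑ τ ∈ partsOf s, ∑ C ∈ τ, f (insert (insert t C) (τ.erase C)) := by
  rw [Finset.sum_sigma']
  symm
  refine Finset.sum_bij (fun p _ => insert (insert t p.2) (p.1.erase p.2)) ?_ ?_ ?_
    fun _ _ => rfl
  · rintro ⟨τ, C⟩ hp
    obtain ⟨hτ, hC⟩ : τ ∈ partsOf s ∧ C ∈ τ := Finset.mem_sigma.mp hp
    replace hτ := mem_partsOf.mp hτ
    refine Finset.mem_filter.mpr ⟨mem_partsOf.mpr (hτ.insert_block ht hC), ?_⟩
    simp only [Finset.mem_insert, not_or]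
    refine ⟨fun h => ?_, fun h => hτ.notMem_of_notMem ht (Finset.mem_of_mem_erase h)
      (Finset.mem_singleton_self t)⟩
    obtain ⟨a, ha⟩ := hτ.nonempty hC
    have hat : a = t := Finset.mem_singleton.mp (h ▸ Finset.mem_insert_of_mem ha)
    exact hτ.notMem_of_notMem ht hC (hat ▸ ha)
  · rintro ⟨τ, C⟩ hp ⟨τ', C'⟩ hp' h
    obtain ⟨hτ, hC⟩ : τ ∈ partsOf s ∧ C ∈ τ := Finset.mem_sigma.mp hp
    obtain ⟨hτ', hC'⟩ : τ' ∈ partsOf s ∧ C' ∈ τ' := Finset.mem_sigma.mp hp'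
    replace hτ := mem_partsOf.mp hτ
    replace hτ' := mem_partsOf.mp hτ'
    dsimp only at h
    have hblock : insert t C = insert t C' :=
      (hτ.insert_block ht hC).eq_of_mem_of_mem (Finset.mem_insert_self _ _)
        (h ▸ Finset.mem_insert_self _ _) (Finset.mem_insert_self t C) (Finset.mem_insert_self t C')
    have hCC' : C = C' := by
      rw [← Finset.erase_insert (hτ.notMem_of_notMem ht hC), hblock,
        Finset.erase_insert (hτ'.notMem_of_notMem ht hC')]
    subst hCC'
    have hnot : ∀ {σ : Finset (Finset α)}, IsPartOn s σ → insert t C ∉ σ.erase C :=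
      fun hσ h => hσ.notMem_of_notMem ht (Finset.mem_of_mem_erase h) (Finset.mem_insert_self t C)
    have herase := congrArg (·.erase (insert t C)) h
    simp only [Finset.erase_insert (hnot hτ), Finset.erase_insert (hnot hτ')] at herase
    obtain rfl : τ = τ' := by rw [← Finset.insert_erase hC, herase, Finset.insert_erase hC']
    rfl
  · intro ρ hρ
    obtain ⟨hρ, htρ⟩ := Finset.mem_filter.mp hρ
    replace hρ := mem_partsOf.mp hρ
    obtain ⟨C, ⟨hC, htC⟩, -⟩ := hρ.2.2 t (Finset.mem_insert_self t s)
    have hτ := hρ.erase_block ht hC htC fun h => htρ (h ▸ hC)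
    have hnot : C.erase t ∉ ρ.erase C := by
      intro h
      obtain ⟨a, ha⟩ := hτ.nonempty (Finset.mem_insert_self _ _)
      exact Finset.ne_of_mem_erase h (hρ.eq_of_mem_of_mem (Finset.mem_of_mem_erase h) hC ha
        (Finset.mem_of_mem_erase ha))
    refine ⟨⟨insert (C.erase t) (ρ.erase C), C.erase t⟩,
      Finset.mem_sigma.mpr ⟨mem_partsOf.mpr hτ, Finset.mem_insert_self _ _⟩, ?_⟩
    dsimp only
    rw [Finset.erase_insert hnot, Finset.insert_erase htC, Finset.insert_erase hC]

/-- A partition of `insert t s` arises from a partition of `s` either by adding the block `{t}`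
or by adding `t` to one of its blocks. -/
lemma sum_partsOf_insert (ht : t ∉ s) (f : Finset (Finset α) → ℝ) :
    ∑ ρ ∈ partsOf (insert t s), f ρ =
      ∑ τ ∈ partsOf s, (f (insert {t} τ) + ∑ C ∈ τ, f (insert (insert t C) (τ.erase C))) := by
  rw [← Finset.sum_filter_add_sum_filter_not _ ({t} ∈ ·), Finset.sum_add_distrib,
    sum_partsOf_insert_filter_singleton_mem ht, sum_partsOf_insert_filter_singleton_notMem ht]

end Parts

section Restrict

variable {α : Type*} [DecidableEq α] {O : Finset α} {τ : Finset (Finset α)} {C : Finset α}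
  {t : α}

lemma restrictPart_insert_singleton (htO : t ∉ O) :
    restrictPart (insert {t} τ) O = restrictPart τ O := by
  rw [restrictPart, Finset.image_insert, Finset.singleton_inter_of_notMem htO,
    Finset.erase_insert_eq_erase, restrictPart]

lemma restrictPart_insert_block (htO : t ∉ O) (hC : C ∈ τ) :
    restrictPart (insert (insert t C) (τ.erase C)) O = restrictPart τ O := by
  conv_rhs => rw [← Finset.insert_erase hC]
  rw [restrictPart, restrictPart, Finset.image_insert, Finset.image_insert,
    Finset.insert_inter_of_notMem htO]

lemma restrictPart_self (hτ : IsPartOn O τ) : restrictPart τ O = τ := by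
  rw [restrictPart, Finset.image_congr fun C hC => Finset.inter_eq_left.mpr (hτ.subset hC),
    Finset.image_id', Finset.erase_eq_of_notMem hτ.2.1]

lemma card_restrictPart_le : (restrictPart τ O).card ≤ τ.card :=
  (Finset.card_erase_le).trans Finset.card_image_le

lemma IsPartOn.sum_card_sub {s : Finset α} (hτ : IsPartOn s τ) (σ : ℝ) :
    ∑ C ∈ τ, ((C.card : ℝ) - σ) = s.card - τ.card * σ := by
  rw [Finset.sum_sub_distrib, ← Nat.cast_sum, hτ.sum_card, Finset.sum_const, nsmul_eq_mul]

end Restrict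

def blockWeight {α : Type*} (σ : ℝ) (ρ : Finset (Finset α)) : ℝ :=
  ∏ C ∈ ρ, risingFac (1 - σ) (C.card - 1)

/-- `ρ` extends the partition `π` of `O`, and no block of `cs` receives an element outside `O`. -/
def IsAvoidingExtension {α : Type*} [DecidableEq α] (O : Finset α) (π cs ρ : Finset (Finset α)) :
    Prop :=
  restrictPart ρ O = π ∧ ∀ C ∈ ρ, ∀ B ∈ cs, B ⊆ C → C ⊆ O

def avoidingTerm {α : Type*} [DecidableEq α] (σ : ℝ) (O : Finset α) (π cs : Finset (Finset α))
    (k : ℕ) (ρ : Finset (Finset α)) : ℝ :=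
  if IsAvoidingExtension O π cs ρ ∧ ρ.card = π.card + k then blockWeight σ ρ else 0

section Avoiding

variable {α : Type*} [DecidableEq α] {O S : Finset α} {π cs τ : Finset (Finset α)}
  {C : Finset α} {t : α}

lemma blockWeight_insert_singleton (σ : ℝ) (h : {t} ∉ τ) :
    blockWeight σ (insert {t} τ) = blockWeight σ τ := by
  rw [blockWeight, Finset.prod_insert h, Finset.card_singleton, Nat.sub_self, risingFac_zero,
    one_mul, blockWeight]

lemma blockWeight_insert_block (σ : ℝ) (hC : C ∈ τ) (hCne : C.Nonempty) (htC : t ∉ C)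
    (hnot : insert t C ∉ τ.erase C) :
    blockWeight σ (insert (insert t C) (τ.erase C)) = ((C.card : ℝ) - σ) * blockWeight σ τ := by
  obtain ⟨c, hc⟩ : ∃ c, C.card = c + 1 := Nat.exists_eq_succ_of_ne_zero hCne.card_pos.ne'
  rw [blockWeight, blockWeight, Finset.prod_insert hnot, ← Finset.mul_prod_erase τ _ hC,
    Finset.card_insert_of_notMem htC, hc, Nat.add_sub_cancel, Nat.add_sub_cancel, risingFac_succ]
  push_cast
  ring

lemma isAvoidingExtension_insert_singleton (hπ : IsPartOn O π) (hcs : cs ⊆ π) (htO : t ∉ O) :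
    IsAvoidingExtension O π cs (insert {t} τ) ↔ IsAvoidingExtension O π cs τ := by
  have hnot : ∀ B ∈ cs, ¬B ⊆ {t} := fun B hB hBt => by
    obtain ⟨a, ha⟩ := hπ.nonempty (hcs hB)
    exact htO (Finset.mem_singleton.mp (hBt ha) ▸ hπ.subset (hcs hB) ha)
  simp only [IsAvoidingExtension, restrictPart_insert_singleton htO, Finset.forall_mem_insert]
  exact and_congr_right fun _ => and_iff_right fun B hB hBt => absurd hBt (hnot B hB)

lemma isAvoidingExtension_insert_block (hπ : IsPartOn O π) (hcs : cs ⊆ π) (htO : t ∉ O)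
    (hC : C ∈ τ) :
    IsAvoidingExtension O π cs (insert (insert t C) (τ.erase C)) ↔
      IsAvoidingExtension O π cs τ ∧ ¬∃ B ∈ cs, B ⊆ C := by
  have hsub : ∀ B ∈ cs, B ⊆ insert t C ↔ B ⊆ C := fun B hB =>
    Finset.subset_insert_iff_of_notMem fun htB => htO (hπ.subset (hcs hB) htB)
  have htC : ¬insert t C ⊆ O := fun h => htO (h (Finset.mem_insert_self t C))
  simp only [IsAvoidingExtension, restrictPart_insert_block htO hC, Finset.forall_mem_insert,
    not_exists, not_and]
  constructor
  · rintro ⟨hres, hnew, hold⟩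
    have hfree : ∀ B ∈ cs, ¬B ⊆ C := fun B hB hBC => htC (hnew B hB ((hsub B hB).mpr hBC))
    refine ⟨⟨hres, fun D hD B hB hBD => ?_⟩, hfree⟩
    by_cases hDC : D = C
    · exact absurd (hDC ▸ hBD) (hfree B hB)
    · exact hold D (Finset.mem_erase.mpr ⟨hDC, hD⟩) B hB hBD
  · rintro ⟨⟨hres, hold⟩, hfree⟩
    exact ⟨hres, fun B hB hBC => absurd ((hsub B hB).mp hBC) (hfree B hB),
      fun D hD => hold D (Finset.mem_of_mem_erase hD)⟩

lemma IsAvoidingExtension.filter_exists_subset_eq (hπ : IsPartOn O π) (hcs : cs ⊆ π)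
    (hτ : IsPartOn S τ) (h : IsAvoidingExtension O π cs τ) :
    τ.filter (fun C => ∃ B ∈ cs, B ⊆ C) = cs := by
  obtain ⟨hres, hfree⟩ := h
  have hmem : ∀ {C}, C ∈ π ↔ C ≠ ∅ ∧ ∃ D ∈ τ, D ∩ O = C := by
    intro C
    rw [← hres, restrictPart, Finset.mem_erase, Finset.mem_image]
  ext C
  rw [Finset.mem_filter]
  constructor
  · rintro ⟨hC, B, hB, hBC⟩
    have hCπ : C ∈ π := hmem.mpr ⟨(hτ.nonempty hC).ne_empty, C, hC,
      Finset.inter_eq_left.mpr (hfree C hC B hB hBC)⟩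
    obtain ⟨a, ha⟩ := hπ.nonempty (hcs hB)
    exact hπ.eq_of_mem_of_mem (hcs hB) hCπ ha (hBC ha) ▸ hB
  · intro hC
    obtain ⟨-, D, hD, rfl⟩ := hmem.mp (hcs hC)
    have hDO : D ⊆ O := hfree D hD _ hC Finset.inter_subset_left
    rw [Finset.inter_eq_left.mpr hDO] at hC ⊢
    exact ⟨hD, D, hC, subset_rfl⟩

lemma IsAvoidingExtension.card_le (h : IsAvoidingExtension O π cs τ) : π.card ≤ τ.card :=
  h.1 ▸ card_restrictPart_le

lemma avoidingTerm_insert_singleton (σ : ℝ) (hπ : IsPartOn O π) (hcs : cs ⊆ π) (htO : t ∉ O)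
    (h : {t} ∉ τ) (k : ℕ) :
    avoidingTerm σ O π cs k (insert {t} τ) =
      if k = 0 then 0 else avoidingTerm σ O π cs (k - 1) τ := by
  rw [avoidingTerm, isAvoidingExtension_insert_singleton hπ hcs htO, Finset.card_insert_of_notMem h,
    blockWeight_insert_singleton σ h]
  cases k with
  | zero => exact if_neg fun hτ => by have := hτ.1.card_le; omega
  | succ k =>
    rw [if_neg k.succ_ne_zero, Nat.add_sub_cancel, avoidingTerm]
    exact if_congr (and_congr_right fun _ => by omega) rfl rfl

lemma sum_avoidingTerm_insert_block (σ : ℝ) (hπ : IsPartOn O π) (hcs : cs ⊆ π) (htO : t ∉ O)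
    (htS : t ∉ S) (hOS : Disjoint O S) (hτ : IsPartOn (O ∪ S) τ) (k : ℕ) :
    ∑ C ∈ τ, avoidingTerm σ O π cs k (insert (insert t C) (τ.erase C)) =
      ((S.card : ℝ) - k * σ + ∑ B ∈ π \ cs, ((B.card : ℝ) - σ)) * avoidingTerm σ O π cs k τ := by
  have htOS : t ∉ O ∪ S := by simp [htO, htS]
  have hterm : ∀ C ∈ τ, avoidingTerm σ O π cs k (insert (insert t C) (τ.erase C)) =
      if ¬∃ B ∈ cs, B ⊆ C then ((C.card : ℝ) - σ) * avoidingTerm σ O π cs k τ else 0 := by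
    intro C hC
    have htC : t ∉ C := hτ.notMem_of_notMem htOS hC
    have hnot : insert t C ∉ τ.erase C := fun h =>
      hτ.notMem_of_notMem htOS (Finset.mem_of_mem_erase h) (Finset.mem_insert_self t C)
    rw [avoidingTerm, avoidingTerm, isAvoidingExtension_insert_block hπ hcs htO hC,
      Finset.card_insert_of_notMem hnot, Finset.card_erase_add_one hC,
      blockWeight_insert_block σ hC (hτ.nonempty hC) htC hnot]
    by_cases hfree : ∃ B ∈ cs, B ⊆ C <;> simp [hfree]
  rw [Finset.sum_congr rfl hterm, ← Finset.sum_filter, ← Finset.sum_mul]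
  by_cases hcond : IsAvoidingExtension O π cs τ ∧ τ.card = π.card + k
  · have hfilter := hcond.1.filter_exists_subset_eq hπ hcs hτ
    have hcsτ : cs ⊆ τ := hfilter ▸ Finset.filter_subset _ _
    rw [Finset.filter_not, hfilter, Finset.sum_sdiff_eq_sub hcsτ, Finset.sum_sdiff_eq_sub hcs,
      hτ.sum_card_sub, hπ.sum_card_sub, Finset.card_union_of_disjoint hOS, hcond.2]
    push_cast
    ring
  · simp only [avoidingTerm, if_neg hcond, mul_zero]

end Avoiding

section AvoidingWeight

variable {α : Type*} [Fintype α] [DecidableEq α] {O S : Finset α} {π cs : Finset (Finset α)}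
  {t : α}

def avoidingWeight (σ : ℝ) (O : Finset α) (π cs : Finset (Finset α)) (S : Finset α) (k : ℕ) :
    ℝ :=
  ∑ ρ ∈ partsOf (O ∪ S), avoidingTerm σ O π cs k ρ

lemma avoidingWeight_empty (σ : ℝ) (hπ : IsPartOn O π) (k : ℕ) :
    avoidingWeight σ O π cs ∅ k = if k = 0 then blockWeight σ π else 0 := by
  rw [avoidingWeight, Finset.union_empty]
  unfold avoidingTerm
  rw [Finset.sum_eq_single_of_mem π (mem_partsOf.mpr hπ) fun ρ hρ hne => if_neg fun h =>
      hne (restrictPart_self (mem_partsOf.mp hρ) ▸ h.1.1)]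
  refine if_congr ?_ rfl rfl
  simp only [IsAvoidingExtension, restrictPart_self hπ, true_and, Nat.left_eq_add,
    and_iff_right_iff_imp]
  exact fun _ C hC _ _ _ => hπ.subset hC

lemma avoidingWeight_insert (σ : ℝ) (hπ : IsPartOn O π) (hcs : cs ⊆ π) (htO : t ∉ O)
    (htS : t ∉ S) (hOS : Disjoint O S) (k : ℕ) :
    avoidingWeight σ O π cs (insert t S) k =
      (if k = 0 then 0 else avoidingWeight σ O π cs S (k - 1)) +
      ((S.card : ℝ) - k * σ + ∑ B ∈ π \ cs, ((B.card : ℝ) - σ)) * avoidingWeight σ O π cs S k := by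
  have htOS : t ∉ O ∪ S := by simp [htO, htS]
  rw [avoidingWeight, Finset.union_insert, sum_partsOf_insert htOS, Finset.sum_add_distrib,
    avoidingWeight, avoidingWeight, Finset.mul_sum]
  congr 1
  · rw [Finset.sum_congr rfl fun τ hτ => avoidingTerm_insert_singleton σ hπ hcs htO
      (fun h => (mem_partsOf.mp hτ).notMem_of_notMem htOS h (Finset.mem_singleton_self t)) k]
    split_ifs
    exacts [Finset.sum_const_zero, rfl]
  · exact Finset.sum_congr rfl fun τ hτ =>
      sum_avoidingTerm_insert_block σ hπ hcs htO htS hOS (mem_partsOf.mp hτ) k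

/-- Adding the new items one at a time, `avoidingWeight` obeys the triangular recurrence of
the generalized factorial coefficients. -/
theorem avoidingWeight_eq {σ : ℝ} (hσ : σ ≠ 0) (hπ : IsPartOn O π) (hcs : cs ⊆ π)
    (hOS : Disjoint O S) (k : ℕ) :
    avoidingWeight σ O π cs S k =
      blockWeight σ π * (gfc S.card k σ (-∑ B ∈ π \ cs, ((B.card : ℝ) - σ)) / σ ^ k) := by
  induction S using Finset.induction_on generalizing k with
  | empty =>
    rw [avoidingWeight_empty σ hπ, Finset.card_empty]
    cases k with
    | zero => simp [gfc_zero_zero]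
    | succ k => simp [gfc_zero_succ]
  | insert t S htS ih =>
    obtain ⟨htO, hOS⟩ := Finset.disjoint_insert_right.mp hOS
    rw [avoidingWeight_insert σ hπ hcs htO htS hOS, Finset.card_insert_of_notMem htS]
    cases k with
    | zero =>
      rw [if_pos rfl, zero_add, ih hOS, gfc_succ_zero]
      ring
    | succ k =>
      rw [if_neg k.succ_ne_zero, Nat.add_sub_cancel, ih hOS, ih hOS, gfc_succ_succ, pow_succ]
      field_simp
      push_cast
      ring

end AvoidingWeight

section Conditioning

variable {α : Type*} [Fintype α] [DecidableEq α] {O : Finset α} {π cs : Finset (Finset α)}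

theorem sum_partsOf_univ_ite_avoiding {σ : ℝ} (hσ : σ ≠ 0) (W : ℕ → ℝ) (hπ : IsPartOn O π)
    (hcs : cs ⊆ π) :
    ∑ ρ ∈ partsOf Finset.univ,
      (if IsAvoidingExtension O π cs ρ then W ρ.card * blockWeight σ ρ else 0) =
      blockWeight σ π * ∑ k ∈ Finset.range (Oᶜ.card + 1),
        W (π.card + k) * (gfc Oᶜ.card k σ (-∑ B ∈ π \ cs, ((B.card : ℝ) - σ)) / σ ^ k) := by
  set N := Fintype.card α + 1
  have hsplit : ∀ ρ ∈ partsOf Finset.univ,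
      (if IsAvoidingExtension O π cs ρ then W ρ.card * blockWeight σ ρ else 0) =
        ∑ k ∈ Finset.range N, W (π.card + k) * avoidingTerm σ O π cs k ρ := by
    intro ρ hρ
    by_cases hext : IsAvoidingExtension O π cs ρ
    · have hle := hext.card_le
      have hlt : ρ.card - π.card < N := by
        have := (mem_partsOf.mp hρ).card_le
        rw [Finset.card_univ] at this
        omega
      rw [if_pos hext, Finset.sum_eq_single_of_mem _ (Finset.mem_range.mpr hlt)
        fun k _ hk => by rw [avoidingTerm, if_neg fun h => hk (by omega), mul_zero],
        avoidingTerm, if_pos ⟨hext, by omega⟩, Nat.add_sub_cancel' hle]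
    · simp [hext, avoidingTerm]
  have hvanish : ∀ k ∈ Finset.range N, k ∉ Finset.range (Oᶜ.card + 1) →
      W (π.card + k) * avoidingWeight σ O π cs Oᶜ k = 0 := by
    intro k _ hk
    rw [Finset.mem_range, not_lt] at hk
    rw [avoidingWeight_eq hσ hπ hcs disjoint_compl_right, gfc_eq_zero_of_lt hk]
    simp
  rw [Finset.sum_congr rfl hsplit, Finset.sum_comm]
  simp_rw [← Finset.mul_sum]
  rw [← Finset.union_compl O]
  change ∑ k ∈ Finset.range N, W (π.card + k) * avoidingWeight σ O π cs Oᶜ k = _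
  have hrange : Finset.range (Oᶜ.card + 1) ⊆ Finset.range N :=
    Finset.range_subset_range.mpr (by simpa [N] using Finset.card_le_univ Oᶜ)
  rw [← Finset.sum_subset hrange hvanish, Finset.mul_sum]
  refine Finset.sum_congr rfl fun k _ => ?_
  rw [avoidingWeight_eq hσ hπ hcs disjoint_compl_right]
  ring

end Conditioning

section Sample

variable {n m : ℕ} {σ : ℝ} {π : Finset (Finset (Fin (n + m)))}

lemma card_oldSet (n m : ℕ) : (oldSet n m).card = n := by
  rw [oldSet, Fin.card_filter_val_lt]
  omega

lemma card_compl_oldSet (n m : ℕ) : (oldSet n m)ᶜ.card = m := by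
  rw [Finset.card_compl, card_oldSet, Fintype.card_fin, Nat.add_sub_cancel_left]

lemma Scount_eq_zero_iff (Bi : Finset (Fin (n + m))) (ρ : Finset (Finset (Fin (n + m)))) :
    Scount n m Bi ρ = 0 ↔ ∀ C ∈ ρ, Bi ⊆ C → C ⊆ oldSet n m := by
  simp only [Scount, Finset.sum_eq_zero_iff, Finset.mem_filter, Finset.card_eq_zero,
    Finset.sdiff_eq_empty_iff_subset, and_imp]

lemma RcntB_eq_card_compl {j : ℕ} (B : Fin j → Finset (Fin (n + m)))
    (ρ : Finset (Finset (Fin (n + m)))) :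
    RcntB n m j B ρ = (Finset.univ.filter fun i => Scount n m (B i) ρ = 0)ᶜ.card := by
  rw [RcntB, Finset.compl_filter]

lemma extensions_eq_filter_partsOf :
    extensions n m π = (partsOf Finset.univ).filter (restrictPart · (oldSet n m) = π) := by
  rw [extensions, partsOf, Finset.filter_filter]

lemma sum_extensions_ite_gibbsW (hσ : σ ≠ 0) (V : ℕ → ℕ → ℝ) (hπ : IsPartOn (oldSet n m) π)
    {cs : Finset (Finset (Fin (n + m)))} (hcs : cs ⊆ π) :
    ∑ ρ ∈ extensions n m π, (if ∀ C ∈ ρ, ∀ B ∈ cs, B ⊆ C → C ⊆ oldSet n m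
      then gibbsW σ (V (n + m)) ρ else 0) =
      blockWeight σ π * ∑ k ∈ Finset.range (m + 1), V (n + m) (π.card + k) *
        (gfc m k σ (-∑ B ∈ π \ cs, ((B.card : ℝ) - σ)) / σ ^ k) := by
  have h := sum_partsOf_univ_ite_avoiding hσ (V (n + m)) hπ hcs
  rw [card_compl_oldSet] at h
  rw [← h, extensions_eq_filter_partsOf, Finset.sum_filter]
  refine Finset.sum_congr rfl fun ρ _ => ?_
  by_cases hres : restrictPart ρ (oldSet n m) = π <;>
    simp [IsAvoidingExtension, hres, gibbsW, blockWeight]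

lemma sum_extensions_gibbsW {V : ℕ → ℕ → ℝ} (hσ : σ ≠ 0) (hVrec : GibbsRecursion σ V)
    (hn : 1 ≤ n) (hπ : IsPartOn (oldSet n m) π) :
    ∑ ρ ∈ extensions n m π, gibbsW σ (V (n + m)) ρ = blockWeight σ π * V n π.card := by
  have hpos : 1 ≤ π.card :=
    hπ.card_pos (Finset.card_pos.mp (by rw [card_oldSet]; omega))
  have hle : π.card ≤ n := (card_oldSet n m).le.trans' hπ.card_le
  have h := sum_extensions_ite_gibbsW hσ V hπ (Finset.empty_subset π)
  simp only [Finset.notMem_empty, IsEmpty.forall_iff, implies_true, if_true,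
    Finset.sdiff_empty] at h
  rw [h, hπ.sum_card_sub, card_oldSet, neg_sub, sum_V_mul_gfc_div_pow hσ hVrec hpos hle]

end Sample

section CondExp

variable {σ : ℝ} {V : ℕ → ℕ → ℝ} {n m : ℕ} {π : Finset (Finset (Fin (n + m)))}

lemma condExpPi_const_mul (a : ℝ) (f : Finset (Finset (Fin (n + m))) → ℝ) :
    condExpPi σ V n m π (fun ρ => a * f ρ) = a * condExpPi σ V n m π f := by
  simp only [condExpPi, mul_assoc, ← Finset.mul_sum, mul_div_assoc]

lemma condExpPi_sum {κ : Type*} (s : Finset κ) (f : κ → Finset (Finset (Fin (n + m))) → ℝ) :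
    condExpPi σ V n m π (fun ρ => ∑ x ∈ s, f x ρ) = ∑ x ∈ s, condExpPi σ V n m π (f x) := by
  simp only [condExpPi, Finset.sum_mul, Finset.sum_div]
  exact Finset.sum_comm

theorem condExpPi_forall_Scount_eq_zero (hσ1 : σ < 1) (hσ0 : σ ≠ 0) (hVrec : GibbsRecursion σ V)
    (hn : 1 ≤ n) {j : ℕ} {B : Fin j → Finset (Fin (n + m))} (hBinj : Function.Injective B)
    (hπ : IsPartOn (oldSet n m) (Finset.image B Finset.univ))
    (c : Finset (Fin j)) :
    condExpPi σ V n m (Finset.image B Finset.univ)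
        (fun ρ => if ∀ i ∈ c, Scount n m (B i) ρ = 0 then 1 else 0) =
      ∑ k ∈ Finset.range (m + 1), V (n + m) (j + k) / V n j *
        (gfc m k σ (-(n : ℝ) + (∑ i ∈ c, ((B i).card : ℝ)) + ((j : ℝ) - c.card) * σ) / σ ^ k) := by
  have hcard : (Finset.image B Finset.univ).card = j := by
    rw [Finset.card_image_of_injective _ hBinj, Finset.card_univ, Fintype.card_fin]
  have hw : blockWeight σ (Finset.image B Finset.univ) ≠ 0 :=
    (Finset.prod_pos fun _ _ => risingFac_pos (by linarith) _).ne'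
  have hcs : Finset.image B c ⊆ Finset.image B Finset.univ :=
    Finset.image_subset_image (Finset.subset_univ c)
  have hfree : ∑ C ∈ Finset.image B Finset.univ \ Finset.image B c, ((C.card : ℝ) - σ) =
      n - j * σ - (∑ i ∈ c, ((B i).card : ℝ) - c.card * σ) := by
    rw [Finset.sum_sdiff_eq_sub hcs, hπ.sum_card_sub, card_oldSet, hcard,
      Finset.sum_image hBinj.injOn, Finset.sum_sub_distrib, Finset.sum_const, nsmul_eq_mul]
  have hnum : ∀ ρ, (if ∀ i ∈ c, Scount n m (B i) ρ = 0 then (1 : ℝ) else 0) *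
      gibbsW σ (V (n + m)) ρ = if ∀ C ∈ ρ, ∀ Bi ∈ Finset.image B c, Bi ⊆ C → C ⊆ oldSet n m
        then gibbsW σ (V (n + m)) ρ else 0 := by
    intro ρ
    rw [ite_mul, one_mul, zero_mul]
    refine if_congr ?_ rfl rfl
    simp only [Scount_eq_zero_iff, Finset.forall_mem_image]
    exact ⟨fun h C hC i hi => h i hi C hC, fun h i hi C hC => h C hC hi⟩
  rw [condExpPi, Finset.sum_congr rfl fun ρ _ => hnum ρ, sum_extensions_ite_gibbsW hσ0 V hπ hcs,
    sum_extensions_gibbsW hσ0 hVrec hn hπ, hcard, mul_div_mul_left _ _ hw, Finset.sum_div, hfree]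
  refine Finset.sum_congr rfl fun k _ => ?_
  rw [show -((n : ℝ) - j * σ - (∑ i ∈ c, ((B i).card : ℝ) - c.card * σ)) =
    -(n : ℝ) + ∑ i ∈ c, ((B i).card : ℝ) + ((j : ℝ) - c.card) * σ by ring]
  ring

end CondExp

theorem looking_backward_moments_complete_general
    (n m j : ℕ) (hn : 1 ≤ n)
    (σ : ℝ) (hσ1 : σ < 1) (hσ0 : σ ≠ 0)
    (V : ℕ → ℕ → ℝ)
    (hVrec : ∀ N k, 1 ≤ k → k ≤ N →
      V N k = V (N + 1) (k + 1) + ((N : ℝ) - (k : ℝ) * σ) * V (N + 1) k)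
    (B : Fin j → Finset (Fin (n + m))) (hBinj : Function.Injective B)
    (hπ : IsPartOn (oldSet n m) (Finset.image B Finset.univ))
    (r : ℕ) :
    condExpPi σ V n m (Finset.image B Finset.univ)
        (fun ρ => fallingFac (RcntB n m j B ρ : ℝ) r) =
      (Nat.factorial r : ℝ) *
        ∑ v ∈ Finset.range (r + 1),
          ibinom ((j : ℤ) - (v : ℤ)) ((r : ℤ) - (v : ℤ)) * (-1 : ℝ) ^ v *
            ∑ c ∈ (Finset.univ : Finset (Fin j)).powersetCard v,
              ∑ k ∈ Finset.range (m + 1),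
                V (n + m) (j + k) / V n j *
                  (gfc m k σ (-(n : ℝ) + (∑ i ∈ c, ((B i).card : ℝ)) + ((j : ℝ) - (v : ℝ)) * σ) /
                    σ ^ k) := by
  simp only [RcntB_eq_card_compl, fallingFac_card_compl_eq_sum, Fintype.card_fin,
    condExpPi_const_mul, condExpPi_sum]
  refine congrArg _ <| Finset.sum_congr rfl fun v _ =>
    congrArg _ <| Finset.sum_congr rfl fun c hc => ?_
  rw [← (Finset.mem_powersetCard.mp hc).2,
    ← condExpPi_forall_Scount_eq_zero hσ1 hσ0 hVrec hn hBinj hπ c]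
  simp only [Finset.subset_iff, Finset.mem_filter, Finset.mem_univ, true_and]

/-- factorial moments of the number of re-observed old species,
given complete information. -/
theorem looking_backward_moments_complete
    (n m j : ℕ) (hn : 1 ≤ n) (hm : 1 ≤ m)
    (σ : ℝ) (hσ1 : σ < 1) (hσ0 : σ ≠ 0)
    (V : ℕ → ℕ → ℝ) (hV11 : V 1 1 = 1)
    (hVnn : ∀ N k, 1 ≤ k → k ≤ N → 0 ≤ V N k)
    (hVrec : ∀ N k, 1 ≤ k → k ≤ N →
      V N k = V (N + 1) (k + 1) + ((N : ℝ) - (k : ℝ) * σ) * V (N + 1) k)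
    (B : Fin j → Finset (Fin (n + m))) (hBinj : Function.Injective B)
    (hπ : IsPartOn (oldSet n m) (Finset.image B Finset.univ))
    (hVnj : 0 < V n j)
    (r : ℕ) (hr : 1 ≤ r) :
    condExpPi σ V n m (Finset.image B Finset.univ)
        (fun ρ => fallingFac (RcntB n m j B ρ : ℝ) r) =
      (Nat.factorial r : ℝ) *
        ∑ v ∈ Finset.range (r + 1),
          ibinom ((j : ℤ) - (v : ℤ)) ((r : ℤ) - (v : ℤ)) * (-1 : ℝ) ^ v *
            ∑ c ∈ (Finset.univ : Finset (Fin j)).powersetCard v,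
              ∑ k ∈ Finset.range (m + 1),
                V (n + m) (j + k) / V n j *
                  (gfc m k σ (-(n : ℝ) + (∑ i ∈ c, ((B i).card : ℝ)) + ((j : ℝ) - (v : ℝ)) * σ) /
                    σ ^ k) :=
  looking_backward_moments_complete_general n m j hn σ hσ1 hσ0 V hVrec B hBinj hπ r
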